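/- arXiv:1902.02379 — 5 statements merged into one kernel-verified Lean document; each statement's English description precedes it below -/
import Mathlib

section
/- Let H be a Hilbert space, let D ⊆ H be a convex set, let T : D → H' be a map into a Hilbert space H' satisfying ‖T((1−t)a₁ + t a₂)‖ ≤ (1−t)‖T a₁‖ + t‖T a₂‖ for all a₁, a₂ ∈ D and t ∈ [0,1], and fix v ∈ H. Define for R > 0, f(R) = inf { ‖a − v‖ : a ∈ D, ‖T a‖ ≤ R }. Then f is convex on (0, ∞) (where we allow f(R) = +∞ if the set is empty). -/
/-! The constraint `‖T a‖ ≤ R` cuts out sublevel sets of the convex function `‖T ·‖` on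
`D`, and a convex combination of points at levels `R₁` and `R₂` lies at level
`(1 - t) R₁ + t R₂`. Since the distance to `v` is convex as well, the combination of any
two admissible points is admissible for `(1 - t) R₁ + t R₂` and no farther from `v` than
the combined distances; taking infima over both points gives convexity. -/

open scoped ENNReal
open Metric

theorem ConvexOn.combo_mem_sublevel {E : Type*} [AddCommGroup E] [Module ℝ E] {D : Set E}
    {g : E → ℝ} (hg : ConvexOn ℝ D g) {R₁ R₂ t : ℝ} (ht0 : 0 ≤ t) (ht1 : t ≤ 1)
    {a₁ a₂ : E}
    (ha₁ : a₁ ∈ {a ∈ D | g a ≤ R₁}) (ha₂ : a₂ ∈ {a ∈ D | g a ≤ R₂}) :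
    (1 - t) • a₁ + t • a₂ ∈ {a ∈ D | g a ≤ (1 - t) * R₁ + t * R₂} := by
  refine ⟨hg.1 ha₁.1 ha₂.1 (by linarith) ht0 (by ring), ?_⟩
  calc g ((1 - t) • a₁ + t • a₂) ≤ (1 - t) * g a₁ + t * g a₂ :=
        hg.2 ha₁.1 ha₂.1 (by linarith) ht0 (by ring)
    _ ≤ (1 - t) * R₁ + t * R₂ := by gcongr <;> linarith [ha₁.2, ha₂.2]

theorem Metric.infEDist_le_of_combo_mem {E : Type*} [SeminormedAddCommGroup E]
    [NormedSpace ℝ E] {s₁ s₂ s : Set E} (v : E) {t : ℝ} (ht0 : 0 < t) (ht1 : t < 1)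
    (h : ∀ a₁ ∈ s₁, ∀ a₂ ∈ s₂, (1 - t) • a₁ + t • a₂ ∈ s) :
    infEDist v s ≤
      ENNReal.ofReal (1 - t) * infEDist v s₁ + ENNReal.ofReal t * infEDist v s₂ := by
  have edist_combo_le : ∀ a₁ a₂ : E, edist v ((1 - t) • a₁ + t • a₂) ≤
      ENNReal.ofReal (1 - t) * edist v a₁ + ENNReal.ofReal t * edist v a₂ := fun a₁ a₂ => by
    simp only [edist_dist, dist_comm v]
    rw [← ENNReal.ofReal_mul (by linarith), ← ENNReal.ofReal_mul ht0.le,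
      ← ENNReal.ofReal_add (by positivity) (by positivity)]
    exact ENNReal.ofReal_le_ofReal <| (convexOn_univ_dist v).2 trivial trivial
      (by linarith) ht0.le (by ring)
  calc infEDist v s
      ≤ ⨅ a₁ ∈ s₁, ⨅ a₂ ∈ s₂,
          ENNReal.ofReal (1 - t) * edist v a₁ + ENNReal.ofReal t * edist v a₂ :=
        le_iInf₂ fun a₁ h₁ => le_iInf₂ fun a₂ h₂ =>
          (infEDist_le_edist_of_mem (h a₁ h₁ a₂ h₂)).trans (edist_combo_le a₁ a₂)
    _ = ENNReal.ofReal (1 - t) * infEDist v s₁ + ENNReal.ofReal t * infEDist v s₂ := by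
        have h₁ : ENNReal.ofReal (1 - t) ≠ 0 := by simpa using ht1
        have h₂ : ENNReal.ofReal t ≠ 0 := by simpa using ht0
        simp only [infEDist, ENNReal.mul_iInf_of_ne h₁ ENNReal.ofReal_ne_top,
          ENNReal.mul_iInf_of_ne h₂ ENNReal.ofReal_ne_top, ENNReal.iInf_add, ENNReal.add_iInf]
        exact iInf₂_comm _

theorem stmt_2 {H H' : Type*} [NormedAddCommGroup H] [InnerProductSpace ℝ H]
    [NormedAddCommGroup H'] [InnerProductSpace ℝ H']
    (D : Set H) (hD : Convex ℝ D) (T : H → H') (v : H)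
    (hT : ∀ a₁ ∈ D, ∀ a₂ ∈ D, ∀ t : ℝ, 0 ≤ t → t ≤ 1 →
      ‖T ((1 - t) • a₁ + t • a₂)‖ ≤ (1 - t) * ‖T a₁‖ + t * ‖T a₂‖)
    (f : ℝ → ℝ≥0∞)
    (hf : ∀ R : ℝ, f R = sInf {r : ℝ≥0∞ | ∃ a ∈ D, ‖T a‖ ≤ R ∧ r = ENNReal.ofReal ‖a - v‖}) :
    ∀ R₁ R₂ : ℝ, 0 < R₁ → 0 < R₂ → ∀ t : ℝ, 0 ≤ t → t ≤ 1 →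
      f ((1 - t) * R₁ + t * R₂) ≤ ENNReal.ofReal (1 - t) * f R₁ + ENNReal.ofReal t * f R₂ := by
  intro R₁ R₂ _ _ t ht0 ht1
  -- at the endpoints `0 * ⊤ = 0`, so `infEDist_le_of_combo_mem` fails if a sublevel set is empty
  rcases ht0.eq_or_lt with rfl | ht0
  · simp
  rcases ht1.eq_or_lt with rfl | ht1
  · simp
  have hconv : ConvexOn ℝ D (‖T ·‖) := ⟨hD, fun a₁ h₁ a₂ h₂ a b _ hb hab => by
    obtain rfl : a = 1 - b := by linarith
    exact hT a₁ h₁ a₂ h₂ b hb (by linarith)⟩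
  have hf_eq : ∀ R, f R = infEDist v {a ∈ D | ‖T a‖ ≤ R} := fun R => by
    rw [hf, infEDist, ← sInf_image]
    congr 1
    ext r
    simp [edist_dist, dist_eq_norm', eq_comm, and_assoc]
  simp only [hf_eq]
  exact infEDist_le_of_combo_mem v ht0 ht1 fun a₁ h₁ a₂ h₂ =>
    hconv.combo_mem_sublevel ht0.le ht1.le h₁ h₂
end

section
/- Let μ be a Borel probability measure on ℝ with finite first moment. For ε > 0 define g_ε(t) = 2 ∫ (t−s)/((t−s)² + ε²) dμ(s). Then for every polynomial p, ∫ g_ε(t) p(t) dμ(t) = ∫∫ [(t−s)²/((t−s)² + ε²)] · [(p(t) − p(s))/(t−s)] dμ(s) dμ(t), where the difference quotient (p(t)−p(s))/(t−s) is interpreted as p'(t) when t = s. -/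
/-!
The kernel `K(t,s) = (t-s)/((t-s)^2+ε^2)` is antisymmetric, so swapping `t` and `s` gives
`∫∫ K(t,s) (p(t)-p(s)) = 2 ∫∫ K(t,s) p(t)`, which is the identity. Fubini applies as soon as
`p(x)/(1+|x|)` is `μ`-integrable, because `|K(t,s)| (1+|t|) ≲ 1+|s|`.
If it is not, both sides are integrals of non-integrable functions, i.e. `0` in Lean:
`t g_ε(t) → 2` as `|t| → ∞` by dominated convergence (this uses the first moment) and
`s K(t,s) → -1`, so integrability of `g_ε p`, or of `s ↦ K(t,s)(p(t)-p(s))`, would force that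
of `p(x)/(1+|x|)`.
-/

open MeasureTheory Filter Topology Bornology

instance isCountablyGenerated_cobounded {E : Type*} [SeminormedAddGroup E] :
    (cobounded E).IsCountablyGenerated := by
  rw [← comap_norm_atTop]
  infer_instance

noncomputable def hilbertKernel (ε t s : ℝ) : ℝ := (t - s) / ((t - s) ^ 2 + ε ^ 2)

section hilbertKernel

variable {ε : ℝ}

theorem hilbertKernel_swap (t s : ℝ) : hilbertKernel ε s t = -hilbertKernel ε t s := by
  rw [hilbertKernel, hilbertKernel, ← neg_sub t s, neg_sq, neg_div]

theorem sq_div_mul_slope_eq_hilbertKernel_mul_sub (q : ℝ → ℝ) (d t s : ℝ) :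
    (t - s) ^ 2 / ((t - s) ^ 2 + ε ^ 2) * (if t = s then d else (q t - q s) / (t - s)) =
      hilbertKernel ε t s * (q t - q s) := by
  rcases eq_or_ne t s with rfl | hts
  · simp [hilbertKernel]
  · have hD : (t - s) ^ 2 + ε ^ 2 ≠ 0 :=
      (add_pos_of_pos_of_nonneg (sq_pos_of_ne_zero (sub_ne_zero.2 hts)) (sq_nonneg ε)).ne'
    rw [if_neg hts, hilbertKernel]
    field_simp [sub_ne_zero.2 hts]

theorem continuous_hilbertKernel (hε : 0 < ε) : Continuous (Function.uncurry (hilbertKernel ε)) :=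
  Continuous.div (by fun_prop) (by fun_prop) fun _ ↦ by positivity

theorem abs_hilbertKernel_le (hε : 0 < ε) (t s : ℝ) : |hilbertKernel ε t s| ≤ 1 / (2 * ε) := by
  have hD : 0 < (t - s) ^ 2 + ε ^ 2 := by positivity
  rw [hilbertKernel, abs_div, abs_of_pos hD, div_le_div_iff₀ hD (by positivity)]
  nlinarith [sq_nonneg (|t - s| - ε), sq_abs (t - s)]

theorem abs_hilbertKernel_mul_abs_sub_le (hε : 0 < ε) (t s : ℝ) :
    |hilbertKernel ε t s| * |t - s| ≤ 1 := by
  have hD : 0 < (t - s) ^ 2 + ε ^ 2 := by positivity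
  rw [hilbertKernel, abs_div, abs_of_pos hD, div_mul_eq_mul_div, div_le_one hD, ← sq, sq_abs]
  linarith [sq_nonneg ε]

theorem abs_hilbertKernel_mul_one_add_abs_le (hε : 0 < ε) (t s : ℝ) :
    |hilbertKernel ε t s| * (1 + |t|) ≤ (1 / (2 * ε) + 1) * (1 + |s|) := by
  have h₁ := abs_hilbertKernel_le hε t s
  have h₂ := abs_hilbertKernel_mul_abs_sub_le hε t s
  have h₃ : |t| ≤ |t - s| + |s| := by linarith [abs_sub_abs_le_abs_sub t s]
  nlinarith [abs_nonneg (hilbertKernel ε t s), abs_nonneg s]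

theorem abs_mul_hilbertKernel_le (hε : 0 < ε) (t s : ℝ) :
    |t * hilbertKernel ε t s| ≤ 1 + |s| / (2 * ε) := by
  have h₁ := abs_hilbertKernel_le hε t s
  have h₂ := abs_hilbertKernel_mul_abs_sub_le hε t s
  have h₃ : |t| ≤ |t - s| + |s| := by linarith [abs_sub_abs_le_abs_sub t s]
  rw [abs_mul, div_eq_mul_one_div]
  nlinarith [abs_nonneg (hilbertKernel ε t s), abs_nonneg s]

theorem tendsto_mul_hilbertKernel (hε : 0 < ε) (s : ℝ) :
    Tendsto (fun t ↦ t * hilbertKernel ε t s) (cobounded ℝ) (𝓝 1) := by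
  -- in the variable `u = t⁻¹` the function extends continuously to `u = 0` with value `1`
  set F : ℝ → ℝ := fun u ↦ (1 - s * u) / ((1 - s * u) ^ 2 + ε ^ 2 * u ^ 2)
  have hF : Tendsto F (𝓝 0) (𝓝 1) := by
    have : ContinuousAt F 0 := .div (by fun_prop) (by fun_prop) (by simp)
    simpa [F] using this.tendsto
  refine (hF.comp tendsto_inv₀_cobounded).congr' ?_
  filter_upwards [eventually_cobounded_le_norm 1] with t ht
  have ht : t ≠ 0 := by rintro rfl; norm_num at ht
  simp only [Function.comp, F, hilbertKernel]
  field_simp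

end hilbertKernel

theorem tendsto_mul_integral_hilbertKernel {μ : Measure ℝ} [IsProbabilityMeasure μ]
    (hmom : Integrable (fun s : ℝ ↦ |s|) μ) {ε : ℝ} (hε : 0 < ε) :
    Tendsto (fun t ↦ t * ∫ s, hilbertKernel ε t s ∂μ) (cobounded ℝ) (𝓝 1) := by
  simp_rw [← integral_const_mul]
  simpa using tendsto_integral_filter_of_dominated_convergence (fun s ↦ 1 + |s| / (2 * ε))
    (.of_forall fun t ↦ ((continuous_hilbertKernel hε).comp
      (Continuous.prodMk_right t)).aestronglyMeasurable.const_mul t)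
    (.of_forall fun t ↦ .of_forall fun s ↦ abs_mul_hilbertKernel_le hε t s)
    ((integrable_const 1).add (hmom.div_const _))
    (.of_forall fun s ↦ tendsto_mul_hilbertKernel hε s)

theorem integrable_div_one_add_abs_of_integrable_mul {μ : Measure ℝ} [IsFiniteMeasure μ]
    {φ q : ℝ → ℝ} {a : ℝ} (hq : Continuous q)
    (hφ : Tendsto (fun x ↦ x * φ x) (cobounded ℝ) (𝓝 a)) (ha : a ≠ 0)
    (hφq : Integrable (fun x ↦ φ x * q x) μ) :
    Integrable (fun x ↦ q x / (1 + |x|)) μ := by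
  have hlarge : ∀ᶠ x in cobounded ℝ, |a| / 2 ≤ |x * φ x| :=
    hφ.abs.eventually (le_mem_nhds (half_lt_self (abs_pos.2 ha)))
  obtain ⟨R, -, hR⟩ := hasBasis_cobounded_norm.eventually_iff.1 hlarge
  obtain ⟨B, hB⟩ := (isCompact_closedBall (0 : ℝ) R).exists_bound_of_continuousOn hq.continuousOn
  refine Integrable.mono' ((hφq.norm.const_mul (2 / |a|)).add (integrable_const |B|))
    (hq.div (by fun_prop) fun x ↦ by positivity).aestronglyMeasurable (.of_forall fun x ↦ ?_)
  have hx₀ : (0 : ℝ) < 1 + |x| := by positivity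
  simp only [Pi.add_apply, norm_div, norm_mul, Real.norm_eq_abs, abs_of_pos hx₀]
  rw [div_le_iff₀ hx₀]
  rcases le_or_gt R ‖x‖ with hx | hx
  · have hxφ : 1 ≤ 2 / |a| * (|x| * |φ x|) := by
      rw [← abs_mul, div_mul_eq_mul_div, le_div_iff₀ (abs_pos.2 ha)]
      linarith [hR hx]
    have hφ₀ : 0 ≤ 2 / |a| * |φ x| := by positivity
    nlinarith [abs_nonneg (q x), abs_nonneg x, abs_nonneg B]
  · have hqx : |q x| ≤ B := hB x (by simpa using hx.le)
    have : 0 ≤ 2 / |a| * (|φ x| * |q x|) := by positivity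
    nlinarith [abs_nonneg x, le_abs_self B, abs_nonneg B]

theorem integral_integral_mul_sub_of_antisymm {α : Type*} [MeasurableSpace α] {μ : Measure α}
    [SFinite μ] {k : α → α → ℝ} (hk : ∀ t s, k s t = -k t s) {q : α → ℝ}
    (hkq : Integrable (fun z : α × α ↦ k z.1 z.2 * q z.1) (μ.prod μ)) :
    ∫ t, ∫ s, k t s * (q t - q s) ∂μ ∂μ = 2 * ∫ t, ∫ s, k t s * q t ∂μ ∂μ := by
  have hkq' : Integrable (fun z : α × α ↦ k z.1 z.2 * q z.2) (μ.prod μ) := by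
    refine hkq.swap.neg.congr (.of_forall fun z ↦ ?_)
    simp only [Pi.neg_apply, Function.comp_apply, Prod.fst_swap, Prod.snd_swap, hk z.2 z.1]
    ring
  have hswap : ∫ z, k z.1 z.2 * q z.2 ∂μ.prod μ = -∫ z, k z.1 z.2 * q z.1 ∂μ.prod μ := by
    rw [← integral_prod_swap (fun z ↦ k z.1 z.2 * q z.1), ← integral_neg]
    congr with z
    simp only [Prod.fst_swap, Prod.snd_swap, hk z.2 z.1]
    ring
  simp_rw [mul_sub]
  rw [integral_integral (hkq.sub hkq'), integral_integral hkq, integral_sub hkq hkq', hswap]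
  ring

theorem integrable_hilbertKernel_mul {μ : Measure ℝ} [IsFiniteMeasure μ]
    (hmom : Integrable (fun s : ℝ ↦ |s|) μ) {ε : ℝ} (hε : 0 < ε) {q : ℝ → ℝ} (hq : Continuous q)
    (hC : Integrable (fun x ↦ q x / (1 + |x|)) μ) :
    Integrable (fun z : ℝ × ℝ ↦ hilbertKernel ε z.1 z.2 * q z.1) (μ.prod μ) := by
  refine Integrable.mono' ((hC.norm.const_mul (1 / (2 * ε) + 1)).mul_prod
    ((integrable_const 1).add hmom)) (((continuous_hilbertKernel hε).mul
      (hq.comp continuous_fst)).aestronglyMeasurable) (.of_forall fun z ↦ ?_)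
  have hz : (0 : ℝ) < 1 + |z.1| := by positivity
  have := abs_hilbertKernel_mul_one_add_abs_le hε z.1 z.2
  simp only [norm_mul, norm_div, Real.norm_eq_abs, abs_of_pos hz, Pi.add_apply]
  calc |hilbertKernel ε z.1 z.2| * |q z.1|
      = |hilbertKernel ε z.1 z.2| * (1 + |z.1|) * (|q z.1| / (1 + |z.1|)) := by field_simp
    _ ≤ (1 / (2 * ε) + 1) * (1 + |z.2|) * (|q z.1| / (1 + |z.1|)) := by gcongr
    _ = _ := by ring

theorem integrable_div_one_add_abs_of_integrable_hilbertKernel_mul_sub {μ : Measure ℝ}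
    [IsFiniteMeasure μ] {ε : ℝ} (hε : 0 < ε) {q : ℝ → ℝ} (hq : Continuous q) {t : ℝ}
    (h : Integrable (fun s ↦ hilbertKernel ε t s * (q t - q s)) μ) :
    Integrable (fun x ↦ q x / (1 + |x|)) μ := by
  have hK : Integrable (hilbertKernel ε t) μ :=
    .of_bound ((continuous_hilbertKernel hε).comp (Continuous.prodMk_right t)).aestronglyMeasurable
      (1 / (2 * ε)) (.of_forall (abs_hilbertKernel_le hε t))
  refine integrable_div_one_add_abs_of_integrable_mul hq (a := -1) ?_ (by norm_num)
    ((hK.mul_const (q t)).sub h |>.congr (.of_forall fun s ↦ by simp only [Pi.sub_apply]; ring))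
  simpa [hilbertKernel_swap t] using (tendsto_mul_hilbertKernel hε t).neg

theorem integrable_div_one_add_abs_of_integrable_integral_hilbertKernel_mul
    {μ : Measure ℝ} [IsProbabilityMeasure μ] (hmom : Integrable (fun s : ℝ ↦ |s|) μ)
    {ε : ℝ} (hε : 0 < ε) {q : ℝ → ℝ} (hq : Continuous q)
    (h : Integrable (fun t ↦ (2 * ∫ s, hilbertKernel ε t s ∂μ) * q t) μ) :
    Integrable (fun x ↦ q x / (1 + |x|)) μ := by
  refine integrable_div_one_add_abs_of_integrable_mul hq (a := 2) ?_ two_ne_zero h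
  simpa [mul_left_comm] using (tendsto_mul_integral_hilbertKernel hmom hε).const_mul 2

theorem stmt_6 (μ : Measure ℝ) [IsProbabilityMeasure μ]
    (hmom : Integrable (fun t : ℝ => |t|) μ) (ε : ℝ) (hε : 0 < ε) (p : Polynomial ℝ) :
    ∫ t, (2 * ∫ s, (t - s) / ((t - s) ^ 2 + ε ^ 2) ∂μ) * p.eval t ∂μ =
      ∫ t, ∫ s, ((t - s) ^ 2 / ((t - s) ^ 2 + ε ^ 2)) *
        (if t = s then (Polynomial.derivative p).eval t
          else (p.eval t - p.eval s) / (t - s)) ∂μ ∂μ := by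
  have hp : Continuous fun x ↦ p.eval x := p.continuous
  simp_rw [sq_div_mul_slope_eq_hilbertKernel_mul_sub (fun x ↦ p.eval x)]
  change ∫ t, (2 * ∫ s, hilbertKernel ε t s ∂μ) * p.eval t ∂μ = _
  by_cases hC : Integrable (fun x ↦ p.eval x / (1 + |x|)) μ
  · rw [integral_integral_mul_sub_of_antisymm hilbertKernel_swap
      (integrable_hilbertKernel_mul hmom hε hp hC), ← integral_const_mul]
    simp_rw [integral_mul_const, mul_assoc]
  · rw [integral_undef (mt (integrable_div_one_add_abs_of_integrable_integral_hilbertKernel_mul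
      hmom hε hp) hC)]
    simp_rw [integral_undef (mt (integrable_div_one_add_abs_of_integrable_hilbertKernel_mul_sub
      hε hp) hC), integral_zero]
end

section
/- Let x be a self-adjoint element of a tracial von Neumann algebra with spectral measure μ on ℝ (compactly supported). If μ has no atoms, then the free Stein irregularity Σ*(x) = 0; i.e., for every η > 0 there exist ξ ∈ L²(μ) and a function A ∈ L²(μ×μ) with ∫ ξ(t)p(t) dμ(t) = ∫∫ A(t,s)·(p(t)−p(s))/(t−s) dμ(s)dμ(t) for all polynomials p, and ∫∫|A − 1|² d(μ×μ) < η². -/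
/-!
The kernel `A_ε(t, s) = (t - s)² / ((t - s)² + ε²)` vanishes on the diagonal and turns the
difference quotient of `p` into `(t - s) / ((t - s)² + ε²) · (p t - p s)`. That kernel is
antisymmetric, so integrating against `μ ⊗ μ` gives `∫ g_ε p dμ` with
`g_ε(t) = 2 ∫ (t - s) / ((t - s)² + ε²) dμ(s)`. As `ε → 0`, `|A_ε - 1|²` converges boundedly to
the indicator of the diagonal, hence `‖A_ε - 1‖² → (μ ⊗ μ)(diagonal)`, which vanishes when `μ`
has no atoms.
-/

open MeasureTheory Filter Topology

theorem MeasureTheory.Measure.prod_diagonal_eq_zero {α : Type*} [MeasurableSpace α]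
    [MeasurableEq α] (μ ν : Measure α) [SFinite ν] [NullSingletonClass ν] :
    μ.prod ν (Set.diagonal α) = 0 := by
  have hslice (x : α) : Prod.mk x ⁻¹' Set.diagonal α = {x} := by
    ext y; simp [eq_comm]
  simp [Measure.prod_apply measurableSet_diagonal, hslice]

noncomputable section

namespace SteinKernel

def steinKernel (ε : ℝ) (q : ℝ × ℝ) : ℝ := (q.1 - q.2) ^ 2 / ((q.1 - q.2) ^ 2 + ε ^ 2)

-- The conjugate Poisson kernel of the upper half-plane, without its factor `1 / π`.
def conjPoissonKernel (ε t s : ℝ) : ℝ := (t - s) / ((t - s) ^ 2 + ε ^ 2)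

def partialConjVar (ε : ℝ) (μ : Measure ℝ) (t : ℝ) : ℝ := 2 * ∫ s, conjPoissonKernel ε t s ∂μ

theorem steinKernel_nonneg (ε : ℝ) (q : ℝ × ℝ) : 0 ≤ steinKernel ε q := by
  unfold steinKernel; positivity

theorem steinKernel_le_one (ε : ℝ) (q : ℝ × ℝ) : steinKernel ε q ≤ 1 :=
  div_le_one_of_le₀ (le_add_of_nonneg_right (sq_nonneg ε)) (by positivity)

theorem steinKernel_diag (ε t : ℝ) : steinKernel ε (t, t) = 0 := by
  simp [steinKernel]

theorem measurable_steinKernel (ε : ℝ) : Measurable (steinKernel ε) := by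
  unfold steinKernel; fun_prop

theorem memLp_steinKernel (ρ : Measure (ℝ × ℝ)) [IsFiniteMeasure ρ] (ε : ℝ) (p : ENNReal) :
    MemLp (steinKernel ε) p ρ :=
  MemLp.of_bound (measurable_steinKernel ε).aestronglyMeasurable 1 <| ae_of_all _ fun q => by
    rw [Real.norm_eq_abs, abs_of_nonneg (steinKernel_nonneg ε q)]
    exact steinKernel_le_one ε q

theorem steinKernel_mul_ite (ε : ℝ) (f : ℝ → ℝ) (d t s : ℝ) :
    steinKernel ε (t, s) * (if t = s then d else (f t - f s) / (t - s)) =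
      conjPoissonKernel ε t s * (f t - f s) := by
  rcases eq_or_ne t s with rfl | hts
  · simp [steinKernel_diag]
  · have : t - s ≠ 0 := sub_ne_zero.mpr hts
    rw [if_neg hts, steinKernel, conjPoissonKernel]
    field_simp

theorem conjPoissonKernel_swap (ε t s : ℝ) :
    conjPoissonKernel ε s t = -conjPoissonKernel ε t s := by
  rw [conjPoissonKernel, conjPoissonKernel, ← neg_div, neg_sub, ← neg_sq (s - t), neg_sub]

theorem abs_conjPoissonKernel_le {ε : ℝ} (hε : 0 < ε) (t s : ℝ) :
    |conjPoissonKernel ε t s| ≤ 1 / (2 * ε) := by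
  have hden : 0 < (t - s) ^ 2 + ε ^ 2 := by positivity
  rw [conjPoissonKernel, abs_div, abs_of_pos hden, div_le_div_iff₀ hden (by positivity)]
  nlinarith [sq_nonneg (|t - s| - ε), sq_abs (t - s), abs_nonneg (t - s)]

theorem measurable_conjPoissonKernel (ε : ℝ) :
    Measurable fun q : ℝ × ℝ => conjPoissonKernel ε q.1 q.2 := by
  unfold conjPoissonKernel; fun_prop

theorem abs_steinKernel_sub_one_le (ε : ℝ) (q : ℝ × ℝ) : |steinKernel ε q - 1| ≤ 1 := by
  rw [abs_sub_comm, abs_of_nonneg (sub_nonneg.mpr (steinKernel_le_one ε q))]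
  linarith [steinKernel_nonneg ε q]

theorem tendsto_steinKernel_of_ne {t s : ℝ} (hts : t ≠ s) :
    Tendsto (steinKernel · (t, s)) (𝓝 0) (𝓝 1) := by
  have hd : (t - s) ^ 2 ≠ 0 := pow_ne_zero 2 (sub_ne_zero.mpr hts)
  have hcont : Continuous (steinKernel · (t, s)) :=
    Continuous.div (by fun_prop) (by fun_prop) fun ε => by positivity
  simpa [steinKernel, hd] using hcont.tendsto 0

theorem tendsto_integral_sq_steinKernel_sub_one (ρ : Measure (ℝ × ℝ)) [IsFiniteMeasure ρ] :
    Tendsto (fun ε => ∫ q, |steinKernel ε q - 1| ^ 2 ∂ρ) (𝓝 0)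
      (𝓝 (ρ.real (Set.diagonal ℝ))) := by
  rw [← integral_indicator_one measurableSet_diagonal]
  refine tendsto_integral_filter_of_dominated_convergence (fun _ => 1)
    (Eventually.of_forall fun ε => ?_) (Eventually.of_forall fun ε => ae_of_all _ fun q => ?_)
    (integrable_const 1) (ae_of_all _ fun q => ?_)
  · exact (((measurable_steinKernel ε).sub_const 1).abs.pow_const 2).aestronglyMeasurable
  · rw [norm_pow, Real.norm_eq_abs, abs_abs]
    exact pow_le_one₀ (abs_nonneg _) (abs_steinKernel_sub_one_le ε q)
  · obtain ⟨t, s⟩ := q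
    rcases eq_or_ne t s with rfl | hts
    · simp [steinKernel_diag]
    · simpa [hts] using ((tendsto_steinKernel_of_ne hts).sub_const 1).abs.pow 2

variable {μ : Measure ℝ} [IsFiniteMeasure μ] {ε : ℝ}

theorem memLp_partialConjVar (hε : 0 < ε) (p : ENNReal) : MemLp (partialConjVar ε μ) p μ := by
  have hmeas : StronglyMeasurable (partialConjVar ε μ) :=
    ((measurable_conjPoissonKernel ε).stronglyMeasurable.integral_prod_right').const_mul 2
  refine MemLp.of_bound hmeas.aestronglyMeasurable (2 * (1 / (2 * ε) * μ.real Set.univ))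
    (Eventually.of_forall fun t => ?_)
  rw [partialConjVar, norm_mul, Real.norm_two]
  gcongr
  exact norm_integral_le_of_norm_le_const (Eventually.of_forall (abs_conjPoissonKernel_le hε t))

theorem integrable_conjPoissonKernel_mul_comp_fst (hε : 0 < ε) {f : ℝ → ℝ}
    (hf : Integrable f μ) :
    Integrable (fun q : ℝ × ℝ => conjPoissonKernel ε q.1 q.2 * f q.1) (μ.prod μ) :=
  (hf.comp_fst μ).bdd_mul (measurable_conjPoissonKernel ε).aestronglyMeasurable
    (Eventually.of_forall fun q => abs_conjPoissonKernel_le hε q.1 q.2)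

theorem integrable_conjPoissonKernel_mul_comp_snd (hε : 0 < ε) {f : ℝ → ℝ}
    (hf : Integrable f μ) :
    Integrable (fun q : ℝ × ℝ => conjPoissonKernel ε q.1 q.2 * f q.2) (μ.prod μ) :=
  (hf.comp_snd μ).bdd_mul (measurable_conjPoissonKernel ε).aestronglyMeasurable
    (Eventually.of_forall fun q => abs_conjPoissonKernel_le hε q.1 q.2)

theorem integral_conjPoissonKernel_mul_fst_eq_neg (f : ℝ → ℝ) :
    ∫ q, conjPoissonKernel ε q.1 q.2 * f q.1 ∂(μ.prod μ) =
      -∫ q, conjPoissonKernel ε q.1 q.2 * f q.2 ∂(μ.prod μ) := by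
  rw [← integral_neg, ← integral_prod_swap fun q => conjPoissonKernel ε q.1 q.2 * f q.1]
  refine integral_congr_ae (ae_of_all _ fun q => ?_)
  simp only [Prod.fst_swap, Prod.snd_swap]
  rw [conjPoissonKernel_swap, neg_mul]

theorem integral_partialConjVar_mul (hε : 0 < ε) {f : ℝ → ℝ} (hf : Integrable f μ) :
    ∫ t, partialConjVar ε μ t * f t ∂μ =
      ∫ t, ∫ s, conjPoissonKernel ε t s * (f t - f s) ∂μ ∂μ := by
  have h₁ := integrable_conjPoissonKernel_mul_comp_fst hε hf
  have h₂ := integrable_conjPoissonKernel_mul_comp_snd hε hf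
  calc ∫ t, partialConjVar ε μ t * f t ∂μ
      = 2 * ∫ t, ∫ s, conjPoissonKernel ε t s * f t ∂μ ∂μ := by
        simp_rw [partialConjVar, integral_mul_const, mul_assoc, integral_const_mul]
    _ = 2 * ∫ q, conjPoissonKernel ε q.1 q.2 * f q.1 ∂(μ.prod μ) := by
        rw [integral_prod _ h₁]
    _ = ∫ q, conjPoissonKernel ε q.1 q.2 * f q.1 ∂(μ.prod μ) -
          ∫ q, conjPoissonKernel ε q.1 q.2 * f q.2 ∂(μ.prod μ) := by
        rw [integral_conjPoissonKernel_mul_fst_eq_neg f]; ring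
    _ = ∫ q, conjPoissonKernel ε q.1 q.2 * (f q.1 - f q.2) ∂(μ.prod μ) := by
        rw [← integral_sub h₁ h₂]; simp_rw [mul_sub]
    _ = ∫ t, ∫ s, conjPoissonKernel ε t s * (f t - f s) ∂μ ∂μ := by
        rw [integral_prod]; simp_rw [mul_sub]; exact h₁.sub h₂

end SteinKernel

end

open SteinKernel

theorem stmt_7 (μ : Measure ℝ) [IsProbabilityMeasure μ] [NullSingletonClass μ]
    (K : Set ℝ) (hK : IsCompact K) (hμK : μ Kᶜ = 0) :
    ∀ η : ℝ, 0 < η → ∃ (ξ : ℝ → ℝ) (A : ℝ × ℝ → ℝ),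
      MemLp ξ 2 μ ∧ MemLp A 2 (μ.prod μ) ∧
      (∀ p : Polynomial ℝ,
        ∫ t, ξ t * p.eval t ∂μ =
          ∫ t, ∫ s, A (t, s) *
            (if t = s then (Polynomial.derivative p).eval t
              else (p.eval t - p.eval s) / (t - s)) ∂μ ∂μ) ∧
      ∫ q, |A q - 1| ^ 2 ∂(μ.prod μ) < η ^ 2 := by
  intro η hη
  obtain ⟨ε, hsmall, hε⟩ : ∃ ε, ∫ q, |steinKernel ε q - 1| ^ 2 ∂(μ.prod μ) < η ^ 2 ∧ 0 < ε := by
    have hlim := tendsto_integral_sq_steinKernel_sub_one (μ.prod μ)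
    rw [measureReal_def, Measure.prod_diagonal_eq_zero, ENNReal.toReal_zero] at hlim
    exact (((hlim.eventually_lt_const (by positivity)).filter_mono nhdsWithin_le_nhds).and
      self_mem_nhdsWithin).exists (f := 𝓝[>] 0)
  have hpoly (p : Polynomial ℝ) : Integrable (p.eval ·) μ := by
    have hsupp : μ.restrict K = μ := Measure.restrict_eq_self_of_ae_mem (mem_ae_iff.mpr hμK)
    simpa [IntegrableOn, hsupp] using p.continuous.continuousOn.integrableOn_compact (μ := μ) hK
  refine ⟨partialConjVar ε μ, steinKernel ε, memLp_partialConjVar hε 2,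
    memLp_steinKernel _ ε 2, fun p => ?_, hsmall⟩
  simp_rw [steinKernel_mul_ite ε (p.eval ·)]
  exact integral_partialConjVar_mul hε (hpoly p)
end

section
/- There exists a compactly supported Borel probability measure μ on ℝ with no atoms whose logarithmic energy is −∞, i.e., ∫∫ log|x−y| dμ(x) dμ(y) = −∞. -/
/-!
Mix uniform distributions on the intervals `[0, ℓₙ]`, `ℓₙ = e^{-12ⁿ}`, with weights `2^{-(n+1)}`.
The `n`-th interval carries mass at least `2^{-(n+1)}`, and any two distinct points in it satisfy
`-log |x - y| ≥ 12ⁿ`, so the energy is at least `12ⁿ · 4^{-(n+1)} = 3ⁿ / 4` for every `n`.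
-/

open MeasureTheory ProbabilityTheory Set Filter Topology
open scoped ENNReal

theorem ae_fst_ne_snd {α : Type*} [MeasurableSpace α] [MeasurableEq α]
    (μ ν : Measure α) [SFinite ν] [NullSingletonClass ν] : ∀ᵐ q ∂μ.prod ν, q.1 ≠ q.2 := by
  refine (Measure.ae_prod_iff_ae_ae (measurableSet_eq_fun measurable_fst measurable_snd).compl).2 ?_
  exact ae_of_all _ fun x =>
    (measure_eq_zero_iff_ae_notMem.1 (measure_singleton (μ := ν) x)).mono fun _ hy => Ne.symm hy

theorem ofReal_neg_log_mul_measure_Icc_sq_le (ν : Measure ℝ) [SFinite ν] [NullSingletonClass ν]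
    (a δ : ℝ) :
    ENNReal.ofReal (-Real.log δ) * ν (Icc a (a + δ)) ^ 2 ≤
      ∫⁻ q, ENNReal.ofReal (-Real.log |q.1 - q.2|) ∂ν.prod ν := by
  set s := Icc a (a + δ)
  have hbound : ∀ᵐ q ∂ν.prod ν, q ∈ s ×ˢ s →
      ENNReal.ofReal (-Real.log δ) ≤ ENNReal.ofReal (-Real.log |q.1 - q.2|) := by
    filter_upwards [ae_fst_ne_snd ν ν] with q hne hq
    have hdist : |q.1 - q.2| ≤ δ := by
      simpa [Real.dist_eq] using Real.dist_le_of_mem_Icc hq.1 hq.2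
    have hpos : 0 < |q.1 - q.2| := abs_pos.2 (sub_ne_zero.2 hne)
    gcongr
  calc ENNReal.ofReal (-Real.log δ) * ν s ^ 2
      = ∫⁻ _ in s ×ˢ s, ENNReal.ofReal (-Real.log δ) ∂ν.prod ν := by
        rw [setLIntegral_const, Measure.prod_prod, sq]
    _ ≤ ∫⁻ q in s ×ˢ s, ENNReal.ofReal (-Real.log |q.1 - q.2|) ∂ν.prod ν :=
        setLIntegral_mono_ae' (measurableSet_Icc.prod measurableSet_Icc) hbound
    _ ≤ _ := setLIntegral_le_lintegral _ _

/-- The density `∑ₙ (2ⁿ⁺¹ ℓₙ)⁻¹ χ_{[0, ℓₙ]}`: the paper's construction, with nested rather than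
disjoint intervals. -/
noncomputable def intervalMixture (ℓ : ℕ → ℝ) : Measure ℝ :=
  Measure.sum fun n => (2⁻¹ : ℝ≥0∞) ^ (n + 1) • volume[|Icc 0 (ℓ n)]

namespace intervalMixture

variable {ℓ : ℕ → ℝ}

theorem isProbabilityMeasure (hℓ : ∀ n, 0 < ℓ n) : IsProbabilityMeasure (intervalMixture ℓ) := by
  have := fun n => cond_isProbabilityMeasure_of_finite (μ := volume) (s := Icc 0 (ℓ n))
    (by simp [hℓ n]) (by simp)
  constructor
  simp only [intervalMixture, Measure.sum_apply _ MeasurableSet.univ, Measure.smul_apply,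
    measure_univ, smul_eq_mul, mul_one, ENNReal.tsum_geometric_add_one, ENNReal.one_sub_inv_two,
    inv_inv]
  exact ENNReal.inv_mul_cancel two_ne_zero ENNReal.ofNat_ne_top

theorem absolutelyContinuous_volume (ℓ : ℕ → ℝ) : intervalMixture ℓ ≪ volume :=
  Measure.absolutelyContinuous_sum_left fun _ => cond_absolutelyContinuous.smul_left _

instance (ℓ : ℕ → ℝ) : SFinite (intervalMixture ℓ) :=
  inferInstanceAs (SFinite (Measure.sum _))

instance (ℓ : ℕ → ℝ) : NullSingletonClass (intervalMixture ℓ) :=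
  ⟨fun x => absolutelyContinuous_volume ℓ (measure_singleton x)⟩

theorem measure_compl_Icc_zero_one (hℓ : ∀ n, ℓ n ≤ 1) : intervalMixture ℓ (Icc 0 1)ᶜ = 0 := by
  simp only [intervalMixture, Measure.sum_apply _ measurableSet_Icc.compl, Measure.smul_apply,
    smul_eq_mul, ENNReal.tsum_eq_zero, mul_eq_zero]
  refine fun n => Or.inr (measure_mono_null (compl_subset_compl.2 (Icc_subset_Icc_right (hℓ n))) ?_)
  rw [cond_apply measurableSet_Icc, inter_compl_self, measure_empty, mul_zero]

theorem inv_two_pow_le_measure_Icc {n : ℕ} (hℓ : 0 < ℓ n) :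
    (2⁻¹ : ℝ≥0∞) ^ (n + 1) ≤ intervalMixture ℓ (Icc 0 (ℓ n)) :=
  calc (2⁻¹ : ℝ≥0∞) ^ (n + 1)
      = ((2⁻¹ : ℝ≥0∞) ^ (n + 1) • volume[|Icc 0 (ℓ n)]) (Icc 0 (ℓ n)) := by
        rw [Measure.smul_apply, cond_apply_self (by simp [hℓ]) (by simp), smul_eq_mul, mul_one]
    _ ≤ intervalMixture ℓ (Icc 0 (ℓ n)) := Measure.le_sum _ n _

theorem ofReal_neg_log_mul_inv_two_pow_sq_le {n : ℕ} (hℓ : 0 < ℓ n) :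
    ENNReal.ofReal (-Real.log (ℓ n)) * ((2⁻¹ : ℝ≥0∞) ^ (n + 1)) ^ 2 ≤
      ∫⁻ q, ENNReal.ofReal (-Real.log |q.1 - q.2|) ∂(intervalMixture ℓ).prod (intervalMixture ℓ) :=
  calc _ ≤ ENNReal.ofReal (-Real.log (ℓ n)) * intervalMixture ℓ (Icc 0 (0 + ℓ n)) ^ 2 := by
        rw [zero_add]
        gcongr
        exact inv_two_pow_le_measure_Icc hℓ
    _ ≤ _ := ofReal_neg_log_mul_measure_Icc_sq_le _ 0 (ℓ n)

end intervalMixture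

theorem ofReal_twelve_pow_mul_inv_two_pow_sq (n : ℕ) :
    ENNReal.ofReal (12 ^ n) * ((2⁻¹ : ℝ≥0∞) ^ (n + 1)) ^ 2 = ENNReal.ofReal (4⁻¹ * 3 ^ n) := by
  have hreal : (12 ^ n * ((2⁻¹ : ℝ) ^ (n + 1)) ^ 2 : ℝ) = 4⁻¹ * 3 ^ n := by
    rw [← pow_mul, mul_comm (n + 1), pow_mul, pow_succ, ← mul_assoc, ← mul_pow]
    norm_num
    ring
  rw [← hreal, ENNReal.ofReal_mul (by positivity)]
  congr 1
  rw [ENNReal.ofReal_pow (by positivity), ENNReal.ofReal_pow (by norm_num),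
    ENNReal.ofReal_inv_of_pos two_pos, ENNReal.ofReal_ofNat]

theorem stmt_8 : ∃ μ : Measure ℝ, IsProbabilityMeasure μ ∧ NoAtoms μ ∧
    μ (Set.Icc (0:ℝ) 1)ᶜ = 0 ∧
    ∫⁻ q : ℝ × ℝ, ENNReal.ofReal (-(Real.log |q.1 - q.2|)) ∂(μ.prod μ) = ⊤ := by
  set ℓ : ℕ → ℝ := fun n => Real.exp (-12 ^ n)
  have hℓ_pos (n : ℕ) : 0 < ℓ n := Real.exp_pos _
  have hℓ_le_one (n : ℕ) : ℓ n ≤ 1 := Real.exp_le_one_iff.2 (by simp only [neg_nonpos]; positivity)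
  refine ⟨intervalMixture ℓ, intervalMixture.isProbabilityMeasure hℓ_pos,
    (inferInstance : NullSingletonClass _),
    intervalMixture.measure_compl_Icc_zero_one hℓ_le_one, ?_⟩
  set μ := intervalMixture ℓ
  have hbound (n : ℕ) :
      ENNReal.ofReal (4⁻¹ * 3 ^ n) ≤ ∫⁻ q, ENNReal.ofReal (-Real.log |q.1 - q.2|) ∂μ.prod μ := by
    have h := intervalMixture.ofReal_neg_log_mul_inv_two_pow_sq_le (hℓ_pos n)
    rwa [Real.log_exp, neg_neg, ofReal_twelve_pow_mul_inv_two_pow_sq] at h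
  have hunbounded : Tendsto (fun n : ℕ => ENNReal.ofReal (4⁻¹ * 3 ^ n)) atTop (𝓝 ∞) :=
    ENNReal.tendsto_ofReal_atTop.comp
      ((tendsto_pow_atTop_atTop_of_one_lt (by norm_num)).const_mul_atTop (by norm_num))
  exact top_le_iff.1 (le_of_tendsto' hunbounded hbound)
end

section
/- Let M be a von Neumann algebra acting on L²(M), identify L²(M⊗̄M°) with the Hilbert–Schmidt operators HS(L²(M)), and let y₀ ∈ M be a diffuse element (its spectral measure has no atoms). If η ∈ HS(L²(M)) satisfies y₀ η = η y₀, then η = 0. -/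
/-!
`T = η† η` is compact (a Hilbert–Schmidt operator is the norm limit of its finite-rank
truncations along the basis), self-adjoint, nonzero and commutes with `y₀`. So `T` has an
eigenvalue `μ ≠ 0`, whose eigenspace is finite-dimensional and `y₀`-invariant; `y₀` then has an
eigenvector inside it, which diffuseness forbids.
-/

open Filter Module.End

section HilbertSchmidt

variable {𝕜 E F ι : Type*} [RCLike 𝕜] [NormedAddCommGroup E] [InnerProductSpace 𝕜 E]
  [NormedAddCommGroup F] [NormedSpace 𝕜 F]

lemma norm_tsum_smul_le_sqrt_mul_sqrt {c : ι → 𝕜} {v : ι → F}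
    (hc : Summable fun i => ‖c i‖ ^ 2) (hv : Summable fun i => ‖v i‖ ^ 2) :
    ‖∑' i, c i • v i‖ ≤ √(∑' i, ‖c i‖ ^ 2) * √(∑' i, ‖v i‖ ^ 2) := by
  obtain ⟨hsum, hle⟩ := Real.summable_and_inner_le_Lp_mul_Lq_tsum_of_nonneg .two_two
    (fun i => norm_nonneg (c i)) (fun i => norm_nonneg (v i))
    (by simpa only [Real.rpow_two] using hc) (by simpa only [Real.rpow_two] using hv)
  simp only [Real.rpow_two, ← Real.sqrt_eq_rpow] at hle
  calc ‖∑' i, c i • v i‖ ≤ ∑' i, ‖c i • v i‖ :=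
        norm_tsum_le_tsum_norm (by simpa only [norm_smul] using hsum)
    _ = ∑' i, ‖c i‖ * ‖v i‖ := by simp only [norm_smul]
    _ ≤ _ := hle

lemma norm_sub_sum_inner_smul_le (b : HilbertBasis ι 𝕜 E) {η : E →L[𝕜] F}
    (hη : Summable fun i => ‖η (b i)‖ ^ 2) (s : Finset ι) (x : E) :
    ‖η x - ∑ i ∈ s, inner 𝕜 (b i) x • η (b i)‖ ≤
      √(∑' i : {i // i ∉ s}, ‖η (b i)‖ ^ 2) * ‖x‖ := by
  have hexp : HasSum (fun i => inner 𝕜 (b i) x • η (b i)) (η x) := by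
    simpa only [map_smul, b.repr_apply_apply] using (b.hasSum_repr x).mapL η
  have htail : η x - ∑ i ∈ s, inner 𝕜 (b i) x • η (b i) =
      ∑' i : {i // i ∉ s}, inner 𝕜 (b i) x • η (b i) := by
    rw [← hexp.tsum_eq, ← hexp.summable.sum_add_tsum_compl (s := s), add_sub_cancel_left]
    rfl
  have hb : Orthonormal 𝕜 fun i : {i // i ∉ s} => b i :=
    b.orthonormal.comp _ Subtype.val_injective
  rw [htail, mul_comm]
  calc _ ≤ √(∑' i : {i // i ∉ s}, ‖inner 𝕜 (b i) x‖ ^ 2) *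
          √(∑' i : {i // i ∉ s}, ‖η (b i)‖ ^ 2) :=
        norm_tsum_smul_le_sqrt_mul_sqrt (hb.inner_products_summable x) (hη.subtype _)
    _ ≤ ‖x‖ * √(∑' i : {i // i ∉ s}, ‖η (b i)‖ ^ 2) := by
        gcongr
        exact (Real.sqrt_le_left (norm_nonneg x)).2 (hb.tsum_inner_products_le x)

lemma isCompactOperator_innerSL_smulRight (u : E) (v : F) :
    IsCompactOperator ((innerSL 𝕜 u).smulRight v) :=
  (isCompactOperator_of_locallyCompactSpace_dom (innerSL 𝕜 u)).continuous_comp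
    (continuous_id.smul continuous_const)

theorem isCompactOperator_of_summable_norm_sq [CompleteSpace F] (b : HilbertBasis ι 𝕜 E)
    {η : E →L[𝕜] F} (hη : Summable fun i => ‖η (b i)‖ ^ 2) : IsCompactOperator η := by
  set Φ : Finset ι → E →L[𝕜] F := fun s => ∑ i ∈ s, (innerSL 𝕜 (b i)).smulRight (η (b i))
  have hΦ (s : Finset ι) : IsCompactOperator (Φ s) :=
    Finset.sum_induction _ (fun T : E →L[𝕜] F => IsCompactOperator T)
      (fun _ _ => IsCompactOperator.add) isCompactOperator_zero
      (fun i _ => isCompactOperator_innerSL_smulRight _ _)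
  refine isCompactOperator_of_tendsto (l := atTop) ?_ (Eventually.of_forall hΦ)
  rw [tendsto_iff_norm_sub_tendsto_zero]
  have htail := (tendsto_tsum_compl_atTop_zero fun i => ‖η (b i)‖ ^ 2).sqrt
  rw [Real.sqrt_zero] at htail
  refine squeeze_zero (fun _ => norm_nonneg _) (fun s => ?_) htail
  rw [norm_sub_rev]
  refine ContinuousLinearMap.opNorm_le_bound _ (Real.sqrt_nonneg _) fun x => ?_
  simpa [Φ] using norm_sub_sum_inner_smul_le b hη s x

end HilbertSchmidt

lemma IsSelfAdjoint.commute_star_mul_self {R : Type*} [Monoid R] [StarMul R] {a b : R}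
    (ha : IsSelfAdjoint a) (hab : Commute a b) : Commute a (star b * b) := by
  have hab' : Commute a (star b) := by simpa only [ha.star_eq] using hab.star_star
  exact hab'.mul_right hab

lemma Module.End.exists_hasEigenvalue_of_commute {K V : Type*} [Field K] [IsAlgClosed K]
    [AddCommGroup V] [Module K V] {f g : Module.End K V} (hfg : Commute f g) {μ : K}
    (hμ : f.HasEigenvalue μ) [FiniteDimensional K (f.eigenspace μ)] :
    ∃ c, g.HasEigenvalue c := by
  have hmaps : ∀ x ∈ f.eigenspace μ, g x ∈ f.eigenspace μ := mapsTo_genEigenspace_of_comm hfg μ 1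
  have : Nontrivial (f.eigenspace μ) := Submodule.nontrivial_iff_ne_bot.2 hμ
  obtain ⟨c, hc⟩ := exists_eigenvalue (g.restrict hmaps)
  obtain ⟨w, hw⟩ := hc.exists_hasEigenvector
  refine ⟨c, hasEigenvalue_of_hasEigenvector (x := (w : V)) ⟨?_, by simpa using hw.2⟩⟩
  exact eigenspace_restrict_le_eigenspace g hmaps c ⟨w, hw.1, rfl⟩

namespace ContinuousLinearMap

variable {𝕜 E : Type*} [RCLike 𝕜] [NormedAddCommGroup E] [InnerProductSpace 𝕜 E] [CompleteSpace E]

lemma exists_hasEigenvalue_ne_zero {T : E →L[𝕜] E} (hT : IsCompactOperator T)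
    (hT' : (T : Module.End 𝕜 E).IsSymmetric) (hT0 : T ≠ 0) :
    ∃ μ, HasEigenvalue (T : Module.End 𝕜 E) μ ∧ μ ≠ 0 := by
  by_contra! h
  exact hT0 ((eq_zero_of_forall_hasEigenvalue_eq_zero hT hT').1 h)

lemma exists_hasEigenvalue_of_commute_isCompactOperator [IsAlgClosed 𝕜] {T S : E →L[𝕜] E}
    (hT : IsCompactOperator T) (hT' : (T : Module.End 𝕜 E).IsSymmetric) (hT0 : T ≠ 0)
    (hTS : Commute T S) : ∃ c, HasEigenvalue (S : Module.End 𝕜 E) c := by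
  obtain ⟨μ, hμ, hμ0⟩ := exists_hasEigenvalue_ne_zero hT hT' hT0
  have := finite_dimensional_eigenspace hT μ hμ0
  have hTS' : Commute (T : Module.End 𝕜 E) S := hTS.map toLinearMapRingHom
  exact exists_hasEigenvalue_of_commute hTS' hμ

end ContinuousLinearMap

theorem stmt_19 {H : Type*} [NormedAddCommGroup H] [InnerProductSpace ℂ H] [CompleteSpace H]
    {ι : Type*} (b : HilbertBasis ι ℂ H)
    (y₀ : H →L[ℂ] H) (hy : IsSelfAdjoint y₀)
    (hdiffuse : ∀ (c : ℂ) (v : H), y₀ v = c • v → v = 0)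
    (η : H →L[ℂ] H) (hHS : Summable fun i => ‖η (b i)‖ ^ 2)
    (hcomm : y₀ ∘L η = η ∘L y₀) :
    η = 0 := by
  by_contra hη
  have hT0 : star η * η ≠ 0 := by
    rwa [← norm_ne_zero_iff, CStarRing.norm_star_mul_self, mul_self_ne_zero, norm_ne_zero_iff]
  obtain ⟨c, hc⟩ := ContinuousLinearMap.exists_hasEigenvalue_of_commute_isCompactOperator
    ((isCompactOperator_of_summable_norm_sq b hHS).clm_comp (star η))
    (IsSelfAdjoint.star_mul_self η).isSymmetric hT0 (hy.commute_star_mul_self hcomm).symm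
  obtain ⟨v, hv, hv0⟩ := hc.exists_hasEigenvector
  exact hv0 (hdiffuse c v (mem_eigenspace_iff.1 hv))
end
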